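/- arXiv:1905.11425 — 5 statements merged into one kernel-verified Lean document; each statement's English description precedes it below -/
import Mathlib

section
/- Under the same conditions (‖F(x,θ)‖ ≤ L(‖θ‖+1), Σ_{t=k₁}^{k₂−1} ε_t ≤ 1/(4L)), the iterates θ_{k+1} = θ_k + ε_k F(X_k,θ_k) satisfy ‖θ_{k₂} − θ_{k₁}‖ ≤ 4L (Σ_{t=k₁}^{k₂−1} ε_t)(‖θ_{k₂}‖ + 1). -/
theorem stmt_5 {d : ℕ} {X : Type*}
    (F : X → EuclideanSpace ℝ (Fin d) → EuclideanSpace ℝ (Fin d))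
    (L : ℝ) (hL : 0 < L)
    (hgrowth : ∀ (x : X) (θ : EuclideanSpace ℝ (Fin d)), ‖F x θ‖ ≤ L * (‖θ‖ + 1))
    (ε : ℕ → ℝ) (hε : ∀ k, 0 ≤ ε k)
    (Xs : ℕ → X) (θ : ℕ → EuclideanSpace ℝ (Fin d))
    (hiter : ∀ k, θ (k + 1) = θ k + ε k • F (Xs k) (θ k))
    (k₁ k₂ : ℕ) (hk : k₁ < k₂)
    (hstep : ∑ t ∈ Finset.Ico k₁ k₂, ε t ≤ 1 / (4 * L)) :
    ‖θ k₂ - θ k₁‖ ≤ 4 * L * (∑ t ∈ Finset.Ico k₁ k₂, ε t) * (‖θ k₂‖ + 1) := by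
  set S := ∑ t ∈ Finset.Ico k₁ k₂, ε t with hSdef
  have hSnn : 0 ≤ S := Finset.sum_nonneg fun t _ => hε t
  have hsub : ∀ k, k ≤ k₂ → ∑ t ∈ Finset.Ico k₁ k, ε t ≤ S := by
    intro k hk2
    exact Finset.sum_le_sum_of_subset_of_nonneg
      (Finset.Ico_subset_Ico le_rfl hk2) (fun t _ _ => hε t)
  have key : ∀ k, k₁ ≤ k → k ≤ k₂ →
      ‖θ k - θ k₁‖ ≤ 2 * L * (∑ t ∈ Finset.Ico k₁ k, ε t) * (‖θ k₁‖ + 1) := by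
    intro k hk1
    induction k, hk1 using Nat.le_induction with
    | base => simp
    | succ n hn ih =>
      intro hn2
      have hn2' : n ≤ k₂ := le_of_lt hn2
      have ih' := ih hn2'
      have hSn : ∑ t ∈ Finset.Ico k₁ (n+1), ε t
          = (∑ t ∈ Finset.Ico k₁ n, ε t) + ε n := Finset.sum_Ico_succ_top hn ε
      have hSnle : (∑ t ∈ Finset.Ico k₁ n, ε t) ≤ 1 / (4 * L) :=
        le_trans (hsub n hn2') hstep
      have hεle : ε n ≤ 1 / (4 * L) := by
        have := hsub (n+1) hn2
        have h0 : (∑ t ∈ Finset.Ico k₁ n, ε t) ≥ 0 :=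
          Finset.sum_nonneg fun t _ => hε t
        nlinarith [le_trans this hstep]
      have htri : ‖θ (n+1) - θ k₁‖ ≤ ‖θ n - θ k₁‖ + ε n * ‖F (Xs n) (θ n)‖ := by
        rw [hiter n]
        have heq : θ n + ε n • F (Xs n) (θ n) - θ k₁
            = (θ n - θ k₁) + ε n • F (Xs n) (θ n) := by abel
        calc ‖θ n + ε n • F (Xs n) (θ n) - θ k₁‖
            = ‖(θ n - θ k₁) + ε n • F (Xs n) (θ n)‖ := by rw [heq]
          _ ≤ ‖θ n - θ k₁‖ + ‖ε n • F (Xs n) (θ n)‖ := norm_add_le _ _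
          _ = ‖θ n - θ k₁‖ + |ε n| * ‖F (Xs n) (θ n)‖ := by rw [norm_smul, Real.norm_eq_abs]
          _ = ‖θ n - θ k₁‖ + ε n * ‖F (Xs n) (θ n)‖ := by rw [abs_of_nonneg (hε n)]
      have hF : ‖F (Xs n) (θ n)‖ ≤ L * (‖θ n‖ + 1) := hgrowth _ _
      have hθn : ‖θ n‖ ≤ ‖θ k₁‖ + ‖θ n - θ k₁‖ := by
        have := norm_sub_norm_le (θ n) (θ k₁)
        linarith [abs_le.mp (abs_norm_sub_norm_le (θ n) (θ k₁))]
      have hA : (0:ℝ) ≤ ‖θ k₁‖ + 1 := by positivity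
      have h0 : (∑ t ∈ Finset.Ico k₁ n, ε t) ≥ 0 :=
        Finset.sum_nonneg fun t _ => hε t
      rw [hSn]
      have hεn := hε n
      have hnorm_nn : (0:ℝ) ≤ ‖θ n - θ k₁‖ := norm_nonneg _
      -- ε n * L ≤ 1/4 and 2 L * Sn ≤ 1/2
      have h1 : ε n * L ≤ 1/4 := by
        rw [le_div_iff₀ (by positivity)] at hεle
        nlinarith
      have h2 : 2 * L * (∑ t ∈ Finset.Ico k₁ n, ε t) ≤ 1/2 := by
        rw [le_div_iff₀ (by positivity)] at hSnle
        nlinarith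
      have hεLA : (0:ℝ) ≤ ε n * L * (‖θ k₁‖ + 1) := by positivity
      nlinarith [mul_le_mul_of_nonneg_left hF hεn,
        mul_le_mul_of_nonneg_left hθn (mul_nonneg hεn hL.le),
        mul_le_mul_of_nonneg_left ih' (mul_nonneg hεn hL.le),
        mul_le_mul_of_nonneg_right h2 hεLA]
  have hD := key k₂ hk.le le_rfl
  rw [← hSdef] at hD
  set D := ‖θ k₂ - θ k₁‖ with hDdef
  have hDnn : 0 ≤ D := norm_nonneg _
  have hθ1 : ‖θ k₁‖ ≤ ‖θ k₂‖ + D := by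
    have := abs_le.mp (abs_norm_sub_norm_le (θ k₂) (θ k₁))
    linarith
  have h4LS : 4 * L * S ≤ 1 := by
    rw [le_div_iff₀ (by positivity)] at hstep
    nlinarith
  have hθ2 : (0:ℝ) ≤ ‖θ k₂‖ := norm_nonneg _
  nlinarith [mul_le_mul_of_nonneg_left hθ1 (mul_nonneg (mul_nonneg (by norm_num : (0:ℝ) ≤ 2) hL.le) hSnn),
    mul_le_mul_of_nonneg_right h4LS hDnn]
end

section
/- Let α > 0, ε > 0, ξ ∈ (0,1), and let h, K satisfy K + h ≥ (2ξ/(αε))^{1/(1−ξ)} and αε/(k+h)^ξ ≤ 1 for all k ≥ K. Define u_K = 0 and u_{k+1} = (1 − αε/(k+h)^ξ) u_k + 1/(k+h)^{2ξ}. Then u_k ≤ (2/(αε)) · 1/(k+h)^ξ for all k ≥ K. -/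
/-!
Induction on `k`. With `x = k + h` and `c = 2/(αε)`, the recursion turns `u_k ≤ c/x^ξ` into
`u_{k+1} ≤ c/x^ξ - 1/x^{2ξ}`. Bernoulli's inequality gives `(x/(x+1))^ξ ≥ 1 - ξ/x`, hence
`c/x^ξ - c/(x+1)^ξ ≤ cξ/x^{1+ξ}`, and this is at most `1/x^{2ξ}` as soon as `cξ ≤ x^{1-ξ}`,
which is the lower bound imposed on `K + h`.
-/

open Real

lemma one_sub_div_le_rpow_div_add_one {x ξ : ℝ} (hx : 0 < x) (hξ0 : 0 ≤ ξ) (hξ1 : ξ ≤ 1) :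
    1 - ξ / x ≤ (x / (x + 1)) ^ ξ := by
  have hbern : ((x + 1) / x) ^ ξ ≤ 1 + ξ / x := by
    have := rpow_one_add_le_one_add_mul_self (s := 1 / x) (by linarith [one_div_pos.2 hx]) hξ0 hξ1
    rwa [one_add_div hx.ne', mul_one_div] at this
  have hpos : 0 < ((x + 1) / x) ^ ξ := by positivity
  rw [← inv_div (x + 1), inv_rpow (by positivity), ← one_div, le_div_iff₀ hpos]
  rcases le_total (ξ / x) 1 with ht | ht
  · nlinarith [mul_le_mul_of_nonneg_left hbern (sub_nonneg.2 ht), sq_nonneg (ξ / x)]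
  · nlinarith

lemma step_preserves_two_div_rpow_bound {a ξ x v : ℝ} (ha : 0 < a) (hξ0 : 0 ≤ ξ) (hξ1 : ξ ≤ 1) (hx : 0 < x)
    (hthr : 2 * ξ / a ≤ x ^ (1 - ξ)) (hsmall : a / x ^ ξ ≤ 1) (hv : v ≤ 2 / a * (1 / x ^ ξ)) :
    (1 - a / x ^ ξ) * v + 1 / x ^ (2 * ξ) ≤ 2 / a * (1 / (x + 1) ^ ξ) := by
  have hy : 0 < x ^ ξ := by positivity
  have hz : 0 < (x + 1) ^ ξ := by positivity
  have hsq : x ^ (2 * ξ) = x ^ ξ * x ^ ξ := by rw [two_mul, rpow_add hx]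
  have hthr_div : 2 * (ξ / x) * x ^ ξ ≤ a := by
    have : x ^ (1 - ξ) * x ^ ξ = x := by rw [← rpow_add hx]; norm_num
    rw [div_le_iff₀ ha] at hthr
    rw [mul_div_assoc', div_mul_eq_mul_div, div_le_iff₀ hx]
    nlinarith
  have hkey : (1 - ξ / x) * (x + 1) ^ ξ ≤ x ^ ξ := by
    have := one_sub_div_le_rpow_div_add_one hx hξ0 hξ1
    rwa [div_rpow hx.le (by linarith), le_div_iff₀ hz] at this
  calc (1 - a / x ^ ξ) * v + 1 / x ^ (2 * ξ)
      ≤ (1 - a / x ^ ξ) * (2 / a * (1 / x ^ ξ)) + 1 / x ^ (2 * ξ) := by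
        gcongr
    _ = 2 / a / x ^ ξ - 1 / (x ^ ξ * x ^ ξ) := by rw [hsq]; field_simp; ring
    _ ≤ 2 / a * (1 / (x + 1) ^ ξ) := by
        rw [div_sub_div _ _ (by positivity) (by positivity), div_le_iff₀ (by positivity)]
        field_simp
        nlinarith [mul_le_mul_of_nonneg_left hkey (by positivity : (0:ℝ) ≤ 2 * x ^ ξ),
          mul_le_mul_of_nonneg_right hthr_div hz.le]

theorem stmt_10_general (α ε h : ℝ) (ξ : ℝ) (hα : 0 < α) (hε : 0 < ε)
    (hξ : ξ ∈ Set.Ioo (0:ℝ) 1)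
    (K : ℕ) (hKh : (2 * ξ / (α * ε)) ^ (1 / (1 - ξ)) ≤ (K : ℝ) + h)
    (hsmall : ∀ k : ℕ, K ≤ k → α * ε / (((k : ℝ) + h) ^ ξ) ≤ 1)
    (u : ℕ → ℝ) (huK : u K = 0)
    (hrec : ∀ k : ℕ, K ≤ k →
      u (k + 1) = (1 - α * ε / (((k : ℝ) + h) ^ ξ)) * u k + 1 / (((k : ℝ) + h) ^ (2 * ξ))) :
    ∀ k : ℕ, K ≤ k → u k ≤ (2 / (α * ε)) * (1 / (((k : ℝ) + h) ^ ξ)) := by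
  obtain ⟨hξ0, hξ1⟩ := hξ
  have ha : 0 < α * ε := mul_pos hα hε
  have hb : 0 < 2 * ξ / (α * ε) := by positivity
  have hpos : ∀ k : ℕ, K ≤ k → 0 < (k : ℝ) + h := fun k hk =>
    calc 0 < (2 * ξ / (α * ε)) ^ (1 / (1 - ξ)) := rpow_pos_of_pos hb _
      _ ≤ (K : ℝ) + h := hKh
      _ ≤ k + h := by gcongr
  intro k hk
  induction k, hk using Nat.le_induction with
  | base =>
    rw [huK]
    have := rpow_pos_of_pos (hpos K le_rfl) ξ
    positivity
  | succ k hk ih =>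
    have hthr : 2 * ξ / (α * ε) ≤ ((k : ℝ) + h) ^ (1 - ξ) := by
      rw [← rpow_inv_le_iff_of_pos hb.le (hpos k hk).le (by linarith), inv_eq_one_div]
      exact hKh.trans (by gcongr)
    rw [hrec k hk, Nat.cast_succ, add_right_comm]
    exact step_preserves_two_div_rpow_bound ha hξ0.le hξ1.le (hpos k hk) hthr (hsmall k hk) ih

theorem stmt_10 (α ε h : ℝ) (ξ : ℝ) (hα : 0 < α) (hε : 0 < ε) (hh : 1 ≤ h)
    (hξ : ξ ∈ Set.Ioo (0:ℝ) 1)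
    (K : ℕ) (hKh : (2 * ξ / (α * ε)) ^ (1 / (1 - ξ)) ≤ (K : ℝ) + h)
    (hsmall : ∀ k : ℕ, K ≤ k → α * ε / (((k : ℝ) + h) ^ ξ) ≤ 1)
    (u : ℕ → ℝ) (huK : u K = 0)
    (hrec : ∀ k : ℕ, K ≤ k →
      u (k + 1) = (1 - α * ε / (((k : ℝ) + h) ^ ξ)) * u k + 1 / (((k : ℝ) + h) ^ (2 * ξ))) :
    ∀ k : ℕ, K ≤ k → u k ≤ (2 / (α * ε)) * (1 / (((k : ℝ) + h) ^ ξ)) :=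
  stmt_10_general α ε h ξ hα hε hξ K hKh hsmall u huK hrec
end

section
/- Let μ be a distribution over state-action pairs that is stationary in the sense that if (s,a) ∼ μ then the successor state s' has the same marginal state distribution as s. Suppose for some κ > 0 and all θ: γ² E_μ[max_a (φ(s,a)ᵀθ)²] − E_μ[(φ(s,a)ᵀθ)²] ≤ −κ‖θ‖², and suppose θ* satisfies F̄(θ*) = 0 where F̄(θ) = E[φ(s,a)(R(s,a) + γ max_{a'} φ(s',a')ᵀθ − φ(s,a)ᵀθ)]. Then (θ − θ*)ᵀ F̄(θ) ≤ −(κ/2)‖θ − θ*‖² for all θ ∈ ℝ^d. -/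
/-! With `ψ = θ - θ*`, `F̄(θ*) = 0` gives `⟪ψ, F̄ θ⟫ = ⟪ψ, F̄ θ - F̄ θ*⟫ = E[(γ Δ(s') - x) x]`, where
`x = φ(s,a)ᵀψ` and `Δ(s')` is the difference of the two maxima over `a'`. The difference of two
maxima is bounded by the maximal difference, so `Δ(s')² ≤ max_{a'} (φ(s',a')ᵀψ)²`, and AM-GM gives
`(γ Δ - x) x ≤ (γ² Δ² - x²) / 2`. Stationarity turns the expectation over the successor `s'` into
one over `s`, and the drift condition bounds the result by `-(κ/2) ‖ψ‖²`. -/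

open scoped RealInnerProductSpace

namespace Finset

variable {ι α : Type*} {s : Finset ι} (H : s.Nonempty)

theorem exists_abs_sup'_sub_sup'_le [AddCommGroup α] [LinearOrder α] [IsOrderedAddMonoid α]
    (f g : ι → α) : ∃ i ∈ s, |s.sup' H f - s.sup' H g| ≤ |f i - g i| := by
  wlog hgf : s.sup' H g ≤ s.sup' H f generalizing f g
  · obtain ⟨i, hi, hle⟩ := this g f (le_of_not_ge hgf)
    exact ⟨i, hi, by rwa [abs_sub_comm, abs_sub_comm (f i)]⟩
  obtain ⟨i, hi, hfi⟩ := s.exists_mem_eq_sup' H f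
  refine ⟨i, hi, ?_⟩
  rw [abs_of_nonneg (sub_nonneg.2 hgf), hfi]
  exact (sub_le_sub_left (s.le_sup' g hi) _).trans (le_abs_self _)

theorem sq_sup'_sub_sup'_le [Ring α] [LinearOrder α] [IsStrictOrderedRing α] (f g : ι → α) :
    (s.sup' H f - s.sup' H g) ^ 2 ≤ s.sup' H (fun i => (f i - g i) ^ 2) := by
  obtain ⟨i, hi, hle⟩ := exists_abs_sup'_sub_sup'_le H f g
  exact (sq_le_sq.2 hle).trans (s.le_sup' (fun i => (f i - g i) ^ 2) hi)

end Finset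

section Stationary

variable {S A β : Type*} [Fintype S] [Fintype A] (μ : S × A → β) (P : S × A → S → β)

theorem sum_mul_sum_succ_eq_of_stationary [CommSemiring β]
    (hstat : ∀ t, ∑ p, μ p * P p t = ∑ b, μ (t, b)) (h : S → β) :
    ∑ p, μ p * ∑ s', P p s' * h s' = ∑ p, μ p * h p.1 := by
  calc ∑ p, μ p * ∑ s', P p s' * h s' = ∑ s', (∑ p, μ p * P p s') * h s' := by
        simp only [Finset.mul_sum, Finset.sum_mul, mul_assoc]
        exact Finset.sum_comm
    _ = ∑ p, μ p * h p.1 := by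
        simp only [hstat, Finset.sum_mul, Fintype.sum_prod_type]

theorem sum_mul_sum_succ_sub_eq_of_stationary [CommRing β] (hP1 : ∀ p, ∑ s', P p s' = 1)
    (hstat : ∀ t, ∑ p, μ p * P p t = ∑ b, μ (t, b)) (c d : β) (h : S → β) (g : S × A → β) :
    ∑ p, μ p * ∑ s', P p s' * (c * h s' - d * g p)
      = c * ∑ p, μ p * h p.1 - d * ∑ p, μ p * g p := by
  have hconst : ∀ p, ∑ s', P p s' * (d * g p) = d * g p := fun p => by
    rw [← Finset.sum_mul, hP1, one_mul]
  simp only [mul_sub, Finset.sum_sub_distrib, hconst]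
  rw [sum_mul_sum_succ_eq_of_stationary μ P hstat (fun s => c * h s)]
  simp only [Finset.mul_sum, mul_left_comm c, mul_left_comm d]

end Stationary

theorem sub_mul_le_of_sq_le {α : Type*} [Field α] [LinearOrder α] [IsStrictOrderedRing α]
    {c Δ x q : α} (hΔ : Δ ^ 2 ≤ q) : (c * Δ - x) * x ≤ c ^ 2 / 2 * q - 1 / 2 * x ^ 2 := by
  nlinarith [sq_nonneg (c * Δ - x), mul_le_mul_of_nonneg_left hΔ (sq_nonneg c)]

theorem stmt_15_general {S A : Type*} [Fintype S] [Fintype A] [Nonempty A] {d : ℕ}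
    (φ : S → A → EuclideanSpace ℝ (Fin d))
    (γ : ℝ)
    (R : S → A → ℝ)
    -- μ is a distribution over state-action pairs
    (μ : S × A → ℝ) (hμ0 : ∀ p, 0 ≤ μ p)
    -- P p s' is the probability that the successor state of the pair p is s'
    (P : S × A → S → ℝ) (hP0 : ∀ p s', 0 ≤ P p s') (hP1 : ∀ p, ∑ s' : S, P p s' = 1)
    -- stationarity: the marginal distribution of the successor state equals that of the state
    (hstat : ∀ t : S, ∑ p : S × A, μ p * P p t = ∑ b : A, μ (t, b))
    (κ : ℝ)
    -- the drift condition on the behavior policy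
    (hkey : ∀ θ : EuclideanSpace ℝ (Fin d),
      γ ^ 2 * ∑ p : S × A, μ p *
          (Finset.univ.sup' Finset.univ_nonempty (fun a : A => ⟪φ p.1 a, θ⟫ ^ 2))
        - ∑ p : S × A, μ p * ⟪φ p.1 p.2, θ⟫ ^ 2 ≤ -κ * ‖θ‖ ^ 2)
    (Fbar : EuclideanSpace ℝ (Fin d) → EuclideanSpace ℝ (Fin d))
    (hFbar : ∀ θ, Fbar θ = ∑ p : S × A, μ p • ∑ s' : S, P p s' •
      ((R p.1 p.2
        + γ * (Finset.univ.sup' Finset.univ_nonempty (fun a' : A => ⟪φ s' a', θ⟫))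
        - ⟪φ p.1 p.2, θ⟫) • φ p.1 p.2))
    (θstar : EuclideanSpace ℝ (Fin d)) (hθstar : Fbar θstar = 0) :
    ∀ θ : EuclideanSpace ℝ (Fin d),
      ⟪θ - θstar, Fbar θ⟫ ≤ -(κ / 2) * ‖θ - θstar‖ ^ 2 := by
  intro θ
  set ψ := θ - θstar
  let M : EuclideanSpace ℝ (Fin d) → S → ℝ := fun v s =>
    Finset.univ.sup' Finset.univ_nonempty (fun a : A => ⟪φ s a, v⟫)
  let Q : S → ℝ := fun s => Finset.univ.sup' Finset.univ_nonempty (fun a : A => ⟪φ s a, ψ⟫ ^ 2)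
  let x : S × A → ℝ := fun p => ⟪φ p.1 p.2, ψ⟫
  have hinner : ∀ v, ⟪ψ, Fbar v⟫ = ∑ p, μ p * ∑ s', P p s' *
      ((R p.1 p.2 + γ * M v s' - ⟪φ p.1 p.2, v⟫) * x p) := by
    simp only [hFbar, inner_sum, real_inner_smul_right, real_inner_comm ψ, M, x, implies_true]
  have hdiff : ⟪ψ, Fbar θ⟫ = ∑ p, μ p * ∑ s', P p s' *
      ((γ * (M θ s' - M θstar s') - x p) * x p) := by
    rw [← sub_zero ⟪ψ, Fbar θ⟫, ← inner_zero_right ψ, ← hθstar, hinner, hinner]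
    simp only [← Finset.sum_sub_distrib, ← mul_sub]
    refine Finset.sum_congr rfl fun p _ => congrArg _ (Finset.sum_congr rfl fun s' _ => ?_)
    simp only [x, ψ, inner_sub_right]
    ring
  have hpoint : ∀ p s', (γ * (M θ s' - M θstar s') - x p) * x p
      ≤ γ ^ 2 / 2 * Q s' - 1 / 2 * x p ^ 2 := fun p s' => by
    refine sub_mul_le_of_sq_le ?_
    simpa only [Q, ψ, inner_sub_right] using Finset.sq_sup'_sub_sup'_le Finset.univ_nonempty _ _
  calc ⟪ψ, Fbar θ⟫ ≤ ∑ p, μ p * ∑ s', P p s' * (γ ^ 2 / 2 * Q s' - 1 / 2 * x p ^ 2) := by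
        rw [hdiff]
        gcongr with p _ s' _
        · exact hμ0 p
        · exact hP0 p s'
        · exact hpoint p s'
    _ = γ ^ 2 / 2 * ∑ p, μ p * Q p.1 - 1 / 2 * ∑ p, μ p * x p ^ 2 :=
        sum_mul_sum_succ_sub_eq_of_stationary μ P hP1 hstat _ _ Q (fun p => x p ^ 2)
    _ ≤ -(κ / 2) * ‖ψ‖ ^ 2 := by linarith [hkey ψ]

theorem stmt_15 {S A : Type*} [Fintype S] [Fintype A] [Nonempty A] {d : ℕ}
    (φ : S → A → EuclideanSpace ℝ (Fin d)) (hφ : ∀ s a, ‖φ s a‖ ≤ 1)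
    (γ : ℝ) (hγ : γ ∈ Set.Ioo (0:ℝ) 1)
    (R : S → A → ℝ)
    -- μ is a distribution over state-action pairs
    (μ : S × A → ℝ) (hμ0 : ∀ p, 0 ≤ μ p) (hμ1 : ∑ p : S × A, μ p = 1)
    -- P p s' is the probability that the successor state of the pair p is s'
    (P : S × A → S → ℝ) (hP0 : ∀ p s', 0 ≤ P p s') (hP1 : ∀ p, ∑ s' : S, P p s' = 1)
    -- stationarity: the marginal distribution of the successor state equals that of the state
    (hstat : ∀ t : S, ∑ p : S × A, μ p * P p t = ∑ b : A, μ (t, b))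
    (κ : ℝ) (hκ : 0 < κ)
    -- the drift condition on the behavior policy
    (hkey : ∀ θ : EuclideanSpace ℝ (Fin d),
      γ ^ 2 * ∑ p : S × A, μ p *
          (Finset.univ.sup' Finset.univ_nonempty (fun a : A => ⟪φ p.1 a, θ⟫ ^ 2))
        - ∑ p : S × A, μ p * ⟪φ p.1 p.2, θ⟫ ^ 2 ≤ -κ * ‖θ‖ ^ 2)
    (Fbar : EuclideanSpace ℝ (Fin d) → EuclideanSpace ℝ (Fin d))
    (hFbar : ∀ θ, Fbar θ = ∑ p : S × A, μ p • ∑ s' : S, P p s' •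
      ((R p.1 p.2
        + γ * (Finset.univ.sup' Finset.univ_nonempty (fun a' : A => ⟪φ s' a', θ⟫))
        - ⟪φ p.1 p.2, θ⟫) • φ p.1 p.2))
    (θstar : EuclideanSpace ℝ (Fin d)) (hθstar : Fbar θstar = 0) :
    ∀ θ : EuclideanSpace ℝ (Fin d),
      ⟪θ - θstar, Fbar θ⟫ ≤ -(κ / 2) * ‖θ - θstar‖ ^ 2 :=
  stmt_15_general φ γ R μ hμ0 P hP0 hP1 hstat κ hkey Fbar hFbar θstar hθstar
end

section
/- Consider the one-dimensional piecewise-linear ODE θ'(t) = h⁺θ(t) + r if θ(t) ≥ 0, and θ'(t) = h⁻θ(t) + r if θ(t) < 0, with r > 0. Then this ODE is globally asymptotically stable with unique equilibrium θ* = −r/h⁺ > 0 if and only if h⁺ < 0 and h⁻ ≤ 0. -/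
/-!
With `θ* = -r / hp`, the vector field satisfies `(x - θ*) f x ≤ -c (x - θ*)²` on every bounded
neighbourhood of `θ*`, with `c = min (-hp) (r / M)` on `|x - θ*| ≤ M`: on `x ≥ 0` the field is
`hp (x - θ*)`, and on `x < 0` it is at least `r` while `x - θ*` is negative. For
`V = (θ - θ*)²` this gives first `V' ≤ 0`, so trajectories stay within distance
`|θ 0 - θ*|` of `θ*`, and then `V' ≤ -2cV` there, so `V` decays exponentially.
Conversely, `θ* > 0` forces `hp < 0`, and `hm > 0` would add the equilibrium `-r / hm < 0`.
-/

open Real Filter Topology Set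

theorem le_mul_exp_neg_of_hasDerivAt_le {V V' : ℝ → ℝ} {k : ℝ}
    (hV : ∀ t, HasDerivAt V (V' t) t) (hV' : ∀ t, 0 ≤ t → V' t ≤ -k * V t)
    {t : ℝ} (ht : 0 ≤ t) : V t ≤ V 0 * exp (-k * t) := by
  have hW : ∀ t, HasDerivAt (fun t => V t * exp (k * t)) ((V' t + k * V t) * exp (k * t)) t :=
    fun t => ((hV t).fun_mul ((hasDerivAt_id t).const_mul k).exp).congr_deriv
      (by simp only [id, mul_one]; ring)
  have hW_anti : AntitoneOn (fun t => V t * exp (k * t)) (Ici 0) := by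
    refine antitoneOn_of_hasDerivWithinAt_nonpos (convex_Ici 0)
      (fun t _ => (hW t).continuousAt.continuousWithinAt) (fun t _ => (hW t).hasDerivWithinAt)
      fun t ht => mul_nonpos_of_nonpos_of_nonneg ?_ (exp_pos _).le
    rw [interior_Ici] at ht
    linarith [hV' t (le_of_lt ht)]
  calc V t = V t * exp (k * t) * exp (-k * t) := by
        rw [mul_assoc, ← exp_add, show k * t + -k * t = 0 by ring, exp_zero, mul_one]
    _ ≤ V 0 * exp (-k * t) := by
        gcongr
        simpa using hW_anti self_mem_Ici ht ht

theorem tendsto_of_hasDerivAt_of_forall_sub_mul_le {F : ℝ → ℝ} {s : ℝ}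
    (hF : ∀ M > 0, ∃ c > 0, ∀ x, |x - s| ≤ M → (x - s) * F x ≤ -c * (x - s) ^ 2)
    {θ : ℝ → ℝ} (hθ : ∀ t, HasDerivAt θ (F (θ t)) t) :
    Tendsto θ atTop (𝓝 s) := by
  have hV : ∀ t, HasDerivAt (fun t => (θ t - s) ^ 2) (2 * ((θ t - s) * F (θ t))) t := fun t =>
    (((hθ t).sub_const s).fun_pow 2).congr_deriv (by push_cast; ring)
  have hF_nonpos : ∀ x, (x - s) * F x ≤ 0 := fun x => by
    obtain ⟨c, hc, h⟩ := hF (|x - s| + 1) (by positivity)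
    nlinarith [h x (by linarith)]
  have hbounded : ∀ t, 0 ≤ t → |θ t - s| ≤ |θ 0 - s| + 1 := fun t ht => by
    have := le_mul_exp_neg_of_hasDerivAt_le (k := 0) hV
      (fun t _ => by linarith [hF_nonpos (θ t)]) ht
    rw [neg_zero, zero_mul, exp_zero, mul_one, sq_le_sq] at this
    linarith
  obtain ⟨c, hc, hcontr⟩ := hF (|θ 0 - s| + 1) (by positivity)
  have hdecay : ∀ t, 0 ≤ t → |θ t - s| ≤ |θ 0 - s| * exp (-c * t) := fun t ht => by
    have := le_mul_exp_neg_of_hasDerivAt_le (k := 2 * c) hV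
      (fun t ht => by linarith [hcontr _ (hbounded t ht)]) ht
    refine abs_le_of_sq_le_sq ?_ (by positivity)
    calc (θ t - s) ^ 2 ≤ (θ 0 - s) ^ 2 * exp (-(2 * c) * t) := this
      _ = (|θ 0 - s| * exp (-c * t)) ^ 2 := by
        rw [mul_pow, sq_abs, ← exp_nat_mul]; ring_nf
  rw [tendsto_iff_norm_sub_tendsto_zero]
  refine squeeze_zero' (Eventually.of_forall fun t => norm_nonneg _)
    ((eventually_ge_atTop 0).mono hdecay) ?_
  simpa using (tendsto_exp_neg_atTop_nhds_zero.comp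
    (tendsto_id.const_mul_atTop hc)).const_mul |θ 0 - s|

noncomputable def piecewiseAffineField (hp hm r x : ℝ) : ℝ :=
  if 0 ≤ x then hp * x + r else hm * x + r

section piecewiseAffineField

variable {hp hm r : ℝ}

theorem piecewiseAffineField_eq_mul_sub (hp0 : hp ≠ 0) {x : ℝ} (hx : 0 ≤ x) :
    piecewiseAffineField hp hm r x = hp * (x - -r / hp) := by
  rw [piecewiseAffineField, if_pos hx]
  field_simp
  ring

theorem le_piecewiseAffineField_of_neg (hm0 : hm ≤ 0) {x : ℝ} (hx : x < 0) :
    r ≤ piecewiseAffineField hp hm r x := by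
  rw [piecewiseAffineField, if_neg hx.not_ge]
  nlinarith

theorem piecewiseAffineField_eq_zero_iff (hr : 0 < r) (hp0 : hp < 0) (hm0 : hm ≤ 0) (x : ℝ) :
    piecewiseAffineField hp hm r x = 0 ↔ x = -r / hp := by
  rcases le_or_gt 0 x with hx | hx
  · rw [piecewiseAffineField_eq_mul_sub hp0.ne hx, mul_eq_zero, sub_eq_zero, or_iff_right hp0.ne]
  · have hθ : 0 < -r / hp := div_pos_of_neg_of_neg (neg_neg_of_pos hr) hp0
    have hr_le := le_piecewiseAffineField_of_neg (hp := hp) (r := r) hm0 hx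
    constructor <;> intro h <;> linarith

theorem piecewiseAffineField_neg_div_eq_zero (hr : 0 < r) (hm0 : 0 < hm) :
    piecewiseAffineField hp hm r (-r / hm) = 0 := by
  rw [piecewiseAffineField, if_neg (div_neg_of_neg_of_pos (neg_neg_of_pos hr) hm0).not_ge,
    mul_div_cancel₀ _ hm0.ne', neg_add_cancel]

theorem sub_mul_piecewiseAffineField_le (hr : 0 < r) (hp0 : hp < 0) (hm0 : hm ≤ 0)
    {M : ℝ} (hM : 0 < M) : ∃ c > 0, ∀ x, |x - -r / hp| ≤ M →
      (x - -r / hp) * piecewiseAffineField hp hm r x ≤ -c * (x - -r / hp) ^ 2 := by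
  set s := -r / hp
  refine ⟨min (-hp) (r / M), lt_min (neg_pos.mpr hp0) (div_pos hr hM), fun x hxM => ?_⟩
  rcases le_or_gt 0 x with hx | hx
  · rw [piecewiseAffineField_eq_mul_sub hp0.ne hx]
    nlinarith [min_le_left (-hp) (r / M), sq_nonneg (x - s)]
  · have hs : 0 < s := div_pos_of_neg_of_neg (neg_neg_of_pos hr) hp0
    have hcr : min (-hp) (r / M) * (s - x) ≤ r :=
      calc min (-hp) (r / M) * (s - x) ≤ r / M * M :=
            mul_le_mul (min_le_right _ _) (by linarith [neg_le_abs (x - s)]) (by linarith)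
              (div_pos hr hM).le
        _ = r := div_mul_cancel₀ r hM.ne'
    nlinarith [le_piecewiseAffineField_of_neg (hp := hp) (r := r) hm0 hx]

end piecewiseAffineField

theorem stmt_17 (hp hm r : ℝ) (hr : 0 < r)
    (f : ℝ → ℝ) (hf : ∀ x : ℝ, f x = if 0 ≤ x then hp * x + r else hm * x + r) :
    (0 < -r / hp ∧ (∀ x : ℝ, f x = 0 ↔ x = -r / hp) ∧
      (∀ θ : ℝ → ℝ, (∀ t : ℝ, HasDerivAt θ (f (θ t)) t) →
        Filter.Tendsto θ Filter.atTop (nhds (-r / hp))))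
    ↔ (hp < 0 ∧ hm ≤ 0) := by
  obtain rfl : f = piecewiseAffineField hp hm r := funext hf
  constructor
  · rintro ⟨hθ, hzero, -⟩
    have hp0 : hp < 0 := ((div_pos_iff.mp hθ).resolve_left fun h => by linarith [h.1]).2
    refine ⟨hp0, not_lt.mp fun hm0 => ?_⟩
    have hθm : -r / hm < 0 := div_neg_of_neg_of_pos (neg_neg_of_pos hr) hm0
    linarith [(hzero _).mp (piecewiseAffineField_neg_div_eq_zero (hp := hp) hr hm0)]
  · rintro ⟨hp0, hm0⟩
    exact ⟨div_pos_of_neg_of_neg (neg_neg_of_pos hr) hp0,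
      piecewiseAffineField_eq_zero_iff hr hp0 hm0,
      fun θ hθ => tendsto_of_hasDerivAt_of_forall_sub_mul_le
        (fun _ hM => sub_mul_piecewiseAffineField_le hr hp0 hm0 hM) hθ⟩
end

section
/- Suppose the feature matrix Φ ∈ ℝ^{|S||A| × d} is square and full rank (d = |S||A|). If γ² ≥ 1/|A|, then there is no behavior policy π with stationary distribution μ (μ(s) > 0 for all s) such that γ² E_μ[max_a (φ(s,a)ᵀθ)²] < E_μ[(φ(s,a)ᵀθ)²] for all θ ≠ 0. -/
/-!
Since the features are linearly independent, for every state-action pair `(s₀, a₀)` some `θ`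
has `⟪φ s a, θ⟫ = 1` at `(s₀, a₀)` and `0` elsewhere. For this `θ` the two sides of the
condition are `γ² μ(s₀)` and `μ(s₀) π(a₀|s₀)`, so the condition forces `γ² < π(a₀|s₀)`.
Choosing `a₀` with `π(a₀|s₀) ≤ 1/|A|` contradicts `1/|A| ≤ γ²`.
-/

open scoped RealInnerProductSpace InnerProductSpace

theorem LinearIndependent.exists_dual_apply_eq_ite {ι K V : Type*} [Field K] [AddCommGroup V] [Module K V]
    [DecidableEq ι] {v : ι → V} (hv : LinearIndependent K v) (i : ι) :
    ∃ f : Module.Dual K V, ∀ j, f (v j) = if j = i then 1 else 0 := by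
  obtain ⟨f, hf⟩ := LinearMap.exists_extend ((Finsupp.lapply i).comp hv.repr)
  refine ⟨f, fun j => ?_⟩
  have hvj : v j ∈ Submodule.span K (Set.range v) := Submodule.subset_span ⟨j, rfl⟩
  have := LinearMap.congr_fun hf ⟨v j, hvj⟩
  simp only [LinearMap.comp_apply, Submodule.subtype_apply] at this
  rw [this, hv.repr_eq_single j _ rfl, Finsupp.lapply_apply, Finsupp.single_apply]

theorem LinearIndependent.exists_inner_eq_ite {ι 𝕜 E : Type*} [RCLike 𝕜]
    [NormedAddCommGroup E] [InnerProductSpace 𝕜 E] [FiniteDimensional 𝕜 E] [DecidableEq ι]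
    {v : ι → E} (hv : LinearIndependent 𝕜 v) (i : ι) :
    ∃ θ : E, ∀ j, ⟪v j, θ⟫_𝕜 = if j = i then 1 else 0 := by
  have : CompleteSpace E := FiniteDimensional.complete 𝕜 E
  obtain ⟨f, hf⟩ := hv.exists_dual_apply_eq_ite i
  refine ⟨(InnerProductSpace.toDual 𝕜 E).symm (LinearMap.toContinuousLinearMap f), fun j => ?_⟩
  rw [← inner_conj_symm, InnerProductSpace.toDual_symm_apply]
  simp [hf, apply_ite]

theorem exists_le_inv_card_of_sum_eq_one {A : Type*} [Fintype A] [Nonempty A] {p : A → ℝ}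
    (hp : ∑ a, p a = 1) : ∃ a, p a ≤ 1 / Fintype.card A := by
  obtain ⟨a, -, ha⟩ := Finset.exists_le_of_sum_le (f := p)
    (g := fun _ => 1 / (Fintype.card A : ℝ)) Finset.univ_nonempty (by simp [hp])
  exact ⟨a, ha⟩

theorem stmt_18_general {S A : Type*} [Fintype S] [Fintype A] [Nonempty S] [Nonempty A] {d : ℕ}
    (φ : S → A → EuclideanSpace ℝ (Fin d))
    (hfull : LinearIndependent ℝ (fun p : S × A => φ p.1 p.2))
    (γ : ℝ) (hγm : 1 / (Fintype.card A : ℝ) ≤ γ ^ 2) :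
    ¬ ∃ (π : S → A → ℝ) (μ : S → ℝ),
      (∀ s a, 0 ≤ π s a) ∧ (∀ s, ∑ a : A, π s a = 1) ∧
      (∀ s, 0 < μ s) ∧ (∑ s : S, μ s = 1) ∧
      (∀ θ : EuclideanSpace ℝ (Fin d), θ ≠ 0 →
        γ ^ 2 * ∑ s : S, μ s *
            (Finset.univ.sup' Finset.univ_nonempty (fun a : A => ⟪φ s a, θ⟫ ^ 2))
          < ∑ s : S, μ s * ∑ a : A, π s a * ⟪φ s a, θ⟫ ^ 2) := by
  classical
  rintro ⟨π, μ, -, hπ, hμ, -, hcond⟩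
  obtain ⟨s₀⟩ := ‹Nonempty S›
  obtain ⟨a₀, ha₀⟩ := exists_le_inv_card_of_sum_eq_one (hπ s₀)
  obtain ⟨θ, hθ⟩ := hfull.exists_inner_eq_ite (s₀, a₀)
  have hθ0 : θ ≠ 0 := by
    rintro rfl
    simpa using hθ (s₀, a₀)
  have hmax : μ s₀ ≤ ∑ s, μ s *
      Finset.univ.sup' Finset.univ_nonempty (fun a : A => ⟪φ s a, θ⟫ ^ 2) := by
    refine le_trans ?_ (Finset.single_le_sum (fun s _ => mul_nonneg (hμ s).le
      (Finset.le_sup'_of_le _ (Finset.mem_univ a₀) (sq_nonneg _))) (Finset.mem_univ s₀))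
    refine le_mul_of_one_le_right (hμ s₀).le (Finset.le_sup'_of_le _ (Finset.mem_univ a₀) ?_)
    simp [hθ (s₀, a₀)]
  have hmean : ∑ s, μ s * ∑ a, π s a * ⟪φ s a, θ⟫ ^ 2 = μ s₀ * π s₀ a₀ := by
    simp [fun s a => hθ (s, a), ite_pow, ite_and, mul_ite]
  have hlt := hcond θ hθ0
  rw [hmean] at hlt
  have hγπ : γ ^ 2 < π s₀ a₀ := by nlinarith [hμ s₀]
  linarith

theorem stmt_18 {S A : Type*} [Fintype S] [Fintype A] [Nonempty S] [Nonempty A] {d : ℕ}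
    (φ : S → A → EuclideanSpace ℝ (Fin d))
    -- the feature matrix is square and full rank
    (hd : Fintype.card S * Fintype.card A = d)
    (hfull : LinearIndependent ℝ (fun p : S × A => φ p.1 p.2))
    (γ : ℝ) (hγ : γ ∈ Set.Ioo (0:ℝ) 1) (hγm : 1 / (Fintype.card A : ℝ) ≤ γ ^ 2) :
    ¬ ∃ (π : S → A → ℝ) (μ : S → ℝ),
      (∀ s a, 0 ≤ π s a) ∧ (∀ s, ∑ a : A, π s a = 1) ∧
      (∀ s, 0 < μ s) ∧ (∑ s : S, μ s = 1) ∧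
      (∀ θ : EuclideanSpace ℝ (Fin d), θ ≠ 0 →
        γ ^ 2 * ∑ s : S, μ s *
            (Finset.univ.sup' Finset.univ_nonempty (fun a : A => ⟪φ s a, θ⟫ ^ 2))
          < ∑ s : S, μ s * ∑ a : A, π s a * ⟪φ s a, θ⟫ ^ 2) :=
  stmt_18_general φ hfull γ hγm
end
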